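/- arXiv:1604.01697 — 3 statements merged into one kernel-verified Lean document; each statement's English description precedes it below -/
import Mathlib

section
/- For integers j ≥ 1 and i with j ≤ i ≤ ⌊e·j⌋, we have sum_{r=j}^{i-1} (1 - ln(r/j))/r² ≥ ln(i/j)/i. -/
/-! With `L i = log (i / j)`, the sum telescopes against `L i / i`: since `log (1 + 1/i) ≤ 1/i`,
each step raises `L i / i` by at most `(L i + 1/i)/(i + 1) - L i / i`, and this is at most the new
summand `(1 - L i)/i²` exactly when `L i ≤ 1`, i.e. when `i ≤ e j`. -/

open Real Finset

lemma log_add_one_div_le {x y : ℝ} (hx : 0 < x) (hy : 0 < y) :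
    log ((x + 1) / y) ≤ log (x / y) + x⁻¹ := by
  have hsplit : (x + 1) / y = x / y * ((x + 1) / x) := by field_simp
  have hratio : (x + 1) / x - 1 = x⁻¹ := by field_simp; ring
  rw [hsplit, log_mul (by positivity) (by positivity)]
  linarith [log_le_sub_one_of_pos (show 0 < (x + 1) / x by positivity)]

lemma add_inv_div_add_one_le {x L : ℝ} (hx : 0 < x) (hL : L ≤ 1) :
    (L + x⁻¹) / (x + 1) ≤ L / x + (1 - L) / x ^ 2 := by
  have hrhs : L / x + (1 - L) / x ^ 2 = (L * x + 1 - L) / x ^ 2 := by field_simp; ring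
  rw [hrhs, div_le_div_iff₀ (by positivity) (by positivity)]
  field_simp
  nlinarith

lemma log_div_div_succ_le {x y : ℝ} (hx : 0 < x) (hy : 0 < y) (hxy : x ≤ exp 1 * y) :
    log ((x + 1) / y) / (x + 1) ≤ log (x / y) / x + (1 - log (x / y)) / x ^ 2 := by
  have hL : log (x / y) ≤ 1 := by
    rw [← log_exp 1]
    exact log_le_log (by positivity) (by rwa [div_le_iff₀ hy])
  calc log ((x + 1) / y) / (x + 1) ≤ (log (x / y) + x⁻¹) / (x + 1) := by
        gcongr
        exact log_add_one_div_le hx hy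
    _ ≤ _ := add_inv_div_add_one_le hx hL

lemma log_div_div_le_sum_Ico {j i : ℕ} (hj : 0 < j) (hji : j ≤ i) (hi : (i : ℝ) ≤ exp 1 * j) :
    log ((i : ℝ) / j) / i ≤ ∑ r ∈ Ico j i, (1 - log ((r : ℝ) / j)) / (r : ℝ) ^ 2 := by
  induction i, hji using Nat.le_induction with
  | base =>
    have hj' : (j : ℝ) ≠ 0 := by positivity
    simp [hj']
  | succ i hji ih =>
    have hi' : (i : ℝ) ≤ exp 1 * j := by push_cast at hi; linarith
    have hi_pos : (0 : ℝ) < i := by exact_mod_cast hj.trans_le hji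
    have hstep := log_div_div_succ_le hi_pos (by positivity : (0 : ℝ) < j) hi'
    rw [sum_Ico_succ_top hji]
    push_cast
    linarith [ih hi']

theorem stmt_3 (j i : ℕ) (hj : 1 ≤ j) (hji : j ≤ i)
    (hi : i ≤ ⌊Real.exp 1 * j⌋₊) :
    Real.log ((i : ℝ) / j) / i ≤
      ∑ r ∈ Finset.Ico j i, (1 - Real.log ((r : ℝ) / j)) / (r : ℝ) ^ 2 := by
  have hi' : (i : ℝ) ≤ exp 1 * j :=
    (Nat.cast_le.mpr hi).trans (Nat.floor_le (by positivity))
  exact log_div_div_le_sum_Ico hj hji hi'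
end

section
/- For every positive integer j, sum_{r=j}^{⌊e·j⌋} (1 - ln(r/j))/r² ≥ 1/(e·j). -/
/-!
The function `g x = (1 - log (x / j)) / x ^ 2` is the derivative of `log (x / j) / x`, so its
integral over `[j, e j]` is exactly `1 / (e j)`. On that interval `g` is nonnegative and
decreasing, so the integral is bounded by the left-endpoint Riemann sum over the integer points
`j, …, ⌊e j⌋`: the unit steps up to `⌊e j⌋` are covered by `g j, …, g (⌊e j⌋ - 1)`, and the
final piece `[⌊e j⌋, e j]`, of length less than one, by `g ⌊e j⌋ ≥ 0`.
-/

open Real Set intervalIntegral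

theorem AntitoneOn.integral_le_sum_Icc_floor {f : ℝ → ℝ} {a : ℕ} {x : ℝ} (hax : (a : ℝ) ≤ x)
    (hf : AntitoneOn f (Icc a x)) (hfx : 0 ≤ f x) :
    ∫ t in (a : ℝ)..x, f t ≤ ∑ r ∈ Finset.Icc a ⌊x⌋₊, f r := by
  set N := ⌊x⌋₊
  have haN : a ≤ N := Nat.le_floor hax
  have haN' : (a : ℝ) ≤ N := by exact_mod_cast haN
  have hNx : (N : ℝ) ≤ x := Nat.floor_le ((Nat.cast_nonneg a).trans hax)
  have hxN : x - N ≤ 1 := by linarith [Nat.lt_floor_add_one x]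
  have hfN : 0 ≤ f N := hfx.trans (hf ⟨haN', hNx⟩ ⟨hax, le_rfl⟩ hNx)
  have hint : ∀ b c : ℝ, a ≤ b → b ≤ c → c ≤ x → IntervalIntegrable f MeasureTheory.volume b c :=
    fun b c hab hbc hcx =>
      (hf.mono (by rw [uIcc_of_le hbc]; exact Icc_subset_Icc hab hcx)).intervalIntegrable
  have hhead : ∫ t in (a : ℝ)..N, f t ≤ ∑ r ∈ Finset.Ico a N, f r :=
    (hf.mono (Icc_subset_Icc le_rfl hNx)).integral_le_sum_Ico haN
  have htail : ∫ t in (N : ℝ)..x, f t ≤ f N := by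
    calc ∫ t in (N : ℝ)..x, f t ≤ ∫ _ in (N : ℝ)..x, f N :=
          integral_mono_on hNx (hint _ _ haN' hNx le_rfl) intervalIntegrable_const
            fun t ht => hf ⟨haN', hNx⟩ ⟨haN'.trans ht.1, ht.2⟩ ht.1
      _ = (x - N) * f N := by rw [integral_const, smul_eq_mul]
      _ ≤ f N := mul_le_of_le_one_left hfN hxN
  rw [← integral_add_adjacent_intervals (hint _ _ le_rfl haN' hNx) (hint _ _ haN' hNx le_rfl),
    ← Finset.Ico_add_one_right_eq_Icc, Finset.sum_Ico_succ_top haN]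
  exact add_le_add hhead htail

theorem hasDerivAt_log_div_div {c x : ℝ} (hc : 0 < c) (hx : 0 < x) :
    HasDerivAt (fun t => log (t / c) / t) ((1 - log (x / c)) / x ^ 2) x := by
  have hlog : HasDerivAt (fun t => log (t / c)) x⁻¹ x := by
    convert ((hasDerivAt_id' x).div_const c).log (div_pos hx hc).ne' using 1
    field_simp
  simpa only [inv_mul_cancel₀ hx.ne', mul_one] using hlog.fun_div (hasDerivAt_id' x) hx.ne'

theorem integral_one_sub_log_div_div_sq {a b c : ℝ} (hc : 0 < c) (ha : 0 < a) (hab : a ≤ b) :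
    ∫ x in a..b, (1 - log (x / c)) / x ^ 2 = log (b / c) / b - log (a / c) / a := by
  have hpos : ∀ x ∈ uIcc a b, 0 < x := fun x hx =>
    ha.trans_le (by rw [uIcc_of_le hab] at hx; exact hx.1)
  refine integral_eq_sub_of_hasDerivAt (fun x hx => hasDerivAt_log_div_div hc (hpos x hx)) ?_
  refine ContinuousOn.intervalIntegrable fun x hx => ?_
  have hx0 := (hpos x hx).ne'
  fun_prop (disch := simp [hx0, hc.ne'])

theorem antitoneOn_one_sub_log_div_div_sq {c : ℝ} (hc : 0 < c) :
    AntitoneOn (fun x => (1 - log (x / c)) / x ^ 2) (Ioc 0 (exp 1 * c)) := by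
  intro x hx y hy hxy
  have hnum : 0 ≤ 1 - log (y / c) := by
    rw [sub_nonneg, ← log_exp 1]
    exact log_le_log (div_pos hy.1 hc) ((div_le_iff₀ hc).2 hy.2)
  have hlog : log (x / c) ≤ log (y / c) :=
    log_le_log (div_pos hx.1 hc) (div_le_div_of_nonneg_right hxy hc.le)
  exact div_le_div₀ (by linarith) (by linarith) (pow_pos hx.1 2) (pow_le_pow_left₀ hx.1.le hxy 2)

theorem stmt_4 (j : ℕ) (hj : 0 < j) :
    1 / (Real.exp 1 * j) ≤
      ∑ r ∈ Finset.Icc j ⌊Real.exp 1 * j⌋₊,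
        (1 - Real.log ((r : ℝ) / j)) / (r : ℝ) ^ 2 := by
  have hj : (0 : ℝ) < j := by exact_mod_cast hj
  have hje : (j : ℝ) ≤ exp 1 * j := le_mul_of_one_le_left hj.le (one_le_exp zero_le_one)
  have hlog : log (exp 1 * j / j) = 1 := by rw [mul_div_cancel_right₀ _ hj.ne', log_exp]
  have hintegral : ∫ x in (j : ℝ)..exp 1 * j, (1 - log (x / j)) / x ^ 2 = 1 / (exp 1 * j) := by
    rw [integral_one_sub_log_div_div_sq hj hj hje, hlog, div_self hj.ne', log_one]
    ring
  rw [← hintegral]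
  refine AntitoneOn.integral_le_sum_Icc_floor hje
    ((antitoneOn_one_sub_log_div_div_sq hj).mono fun x hx => ⟨hj.trans_le hx.1, hx.2⟩) ?_
  rw [hlog, sub_self, zero_div]
end

section
/- Let 0 < ε < 1, and let n be a positive integer. Define z_r = 1/(r(r+1)) and w_r = e·(1-ε)·ln((r+1)/r) for r ≤ ε·n (and w_r = 0 otherwise). Then for all integers 1 ≤ k ≤ i ≤ ε·n: (i+1)·sum_{r=k}^n z_r - sum_{r=k}^i w_r ≥ 0. -/
/-!
Both sums telescope: `∑_{r=k}^n z_r = 1/k - 1/(n+1)` and `∑_{r=k}^i w_r = e(1-ε) log((i+1)/k)`.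
Since `k ≤ εn < ε(n+1)`, we have `1/(n+1) ≤ ε/k`, so `(i+1)(1/k - 1/(n+1)) ≥ (1-ε) x` with
`x = (i+1)/k`, and `(1-ε) x ≥ e(1-ε) log x` because `e log x ≤ x` (tangent line of `log` at `e`).
-/

open Finset Real

lemma sum_Icc_one_div_mul_add_one {k n : ℕ} (hk : 1 ≤ k) (hkn : k ≤ n) :
    ∑ r ∈ Icc k n, 1 / ((r : ℝ) * ((r : ℝ) + 1)) = 1 / (k : ℝ) - 1 / ((n : ℝ) + 1) := by
  have hsub := sum_Icc_sub hkn (fun r : ℕ => 1 / (r : ℝ))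
  push_cast at hsub
  calc ∑ r ∈ Icc k n, 1 / ((r : ℝ) * ((r : ℝ) + 1))
      = ∑ r ∈ Icc k n, -(1 / ((r : ℝ) + 1) - 1 / r) := by
        refine sum_congr rfl fun r hr => ?_
        have hr : (0 : ℝ) < r := by exact_mod_cast hk.trans (mem_Icc.mp hr).1
        field_simp
        ring
    _ = 1 / (k : ℝ) - 1 / ((n : ℝ) + 1) := by rw [sum_neg_distrib, hsub, neg_sub]

lemma sum_Icc_log_add_one_div {k i : ℕ} (hk : 1 ≤ k) (hki : k ≤ i) :
    ∑ r ∈ Icc k i, log (((r : ℝ) + 1) / r) = log (((i : ℝ) + 1) / k) := by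
  have hk : (0 : ℝ) < k := by exact_mod_cast hk
  have hsub := sum_Icc_sub hki (fun r : ℕ => log (r : ℝ))
  push_cast at hsub
  rw [log_div (by positivity) hk.ne', ← hsub]
  refine sum_congr rfl fun r hr => ?_
  have hr : (0 : ℝ) < r := hk.trans_le (by exact_mod_cast (mem_Icc.mp hr).1)
  exact log_div (by positivity) hr.ne'

lemma exp_one_mul_log_le {x : ℝ} (hx : 0 < x) : exp 1 * log x ≤ x := by
  have h := log_le_sub_one_of_pos (div_pos hx (exp_pos 1))
  rw [log_div hx.ne' (exp_pos 1).ne', log_exp, le_sub_iff_add_le, sub_add_cancel,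
    le_div_iff₀ (exp_pos 1)] at h
  linarith

lemma exp_one_mul_one_sub_mul_log_le {ε K I N : ℝ} (hε : ε ≤ 1) (hK : 0 < K) (hKI : K ≤ I)
    (hN : 0 < N) (hKN : K ≤ ε * N) :
    exp 1 * (1 - ε) * log (I / K) ≤ I * (1 / K - 1 / N) := by
  have hI : 0 < I := hK.trans_le hKI
  have hNK : 1 / N ≤ ε / K := by
    rw [div_le_div_iff₀ hN hK]
    linarith
  calc exp 1 * (1 - ε) * log (I / K) = (1 - ε) * (exp 1 * log (I / K)) := by ring
    _ ≤ (1 - ε) * (I / K) :=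
        mul_le_mul_of_nonneg_left (exp_one_mul_log_le (div_pos hI hK)) (by linarith)
    _ = I * (1 / K - ε / K) := by ring
    _ ≤ I * (1 / K - 1 / N) := by gcongr

theorem stmt_16_general (ε : ℝ) (hε0 : 0 < ε) (hε1 : ε < 1)
    (n : ℕ)
    (z w : ℕ → ℝ)
    (hz : ∀ r : ℕ, z r = 1 / ((r : ℝ) * ((r : ℝ) + 1)))
    (hw : ∀ r : ℕ, w r =
      if (r : ℝ) ≤ ε * n then Real.exp 1 * (1 - ε) * Real.log (((r : ℝ) + 1) / r)
      else 0) :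
    ∀ k i : ℕ, 1 ≤ k → k ≤ i → (i : ℝ) ≤ ε * n →
      ((i : ℝ) + 1) * (∑ r ∈ Finset.Icc k n, z r) -
        (∑ r ∈ Finset.Icc k i, w r) ≥ 0 := by
  intro k i hk hki hin
  have hki' : (k : ℝ) ≤ i := by exact_mod_cast hki
  have hkn : k ≤ n := by
    have : (k : ℝ) ≤ n := by nlinarith [(n.cast_nonneg : (0 : ℝ) ≤ n)]
    exact_mod_cast this
  have hw_sum : ∑ r ∈ Icc k i, w r = exp 1 * (1 - ε) * log (((i : ℝ) + 1) / k) := by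
    rw [← sum_Icc_log_add_one_div hk hki, mul_sum]
    refine sum_congr rfl fun r hr => ?_
    have hr : (r : ℝ) ≤ i := by exact_mod_cast (mem_Icc.mp hr).2
    rw [hw, if_pos (hr.trans hin)]
  rw [sum_congr rfl fun r _ => hz r, sum_Icc_one_div_mul_add_one hk hkn, hw_sum, ge_iff_le,
    sub_nonneg]
  exact exp_one_mul_one_sub_mul_log_le hε1.le (by exact_mod_cast hk) (by linarith)
    (by positivity) (by linarith)

theorem stmt_16 (ε : ℝ) (hε0 : 0 < ε) (hε1 : ε < 1)
    (n : ℕ) (hn : 0 < n)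
    (z w : ℕ → ℝ)
    (hz : ∀ r : ℕ, z r = 1 / ((r : ℝ) * ((r : ℝ) + 1)))
    (hw : ∀ r : ℕ, w r =
      if (r : ℝ) ≤ ε * n then Real.exp 1 * (1 - ε) * Real.log (((r : ℝ) + 1) / r)
      else 0) :
    ∀ k i : ℕ, 1 ≤ k → k ≤ i → (i : ℝ) ≤ ε * n →
      ((i : ℝ) + 1) * (∑ r ∈ Finset.Icc k n, z r) -
        (∑ r ∈ Finset.Icc k i, w r) ≥ 0 :=
  stmt_16_general ε hε0 hε1 n z w hz hw
end
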